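/- arXiv:2509.04631 — 5 statements merged into one kernel-verified Lean document; each statement's English description precedes it below -/
import Mathlib

section
/- Let X, Y, Z be finite sets with (X,Y) jointly distributed according to P and Z independent of (X,Y). Let Γ be a set-valued predictor mapping (z,x) to a subset of Y, and suppose the error probability P(Y ∉ Γ(Z,X)) ≤ α. Then for any β ∈ (0,1): P(P(Y|X) ≤ β) ≤ α + β·E[|Γ(Z,X)|]. -/
/-- Information-spectrum bound for transductive confidence predictors:
if `(X,Y) ~ P`, `Z ~ R` is independent of `(X,Y)`, and the set-valued predictor `Γ`
satisfies `P(Y ∉ Γ(Z,X)) ≤ α`, then for any `β ∈ (0,1)`,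
`P(P(Y|X) ≤ β) ≤ α + β · E[|Γ(Z,X)|]`.
Here `P(Y|X) ≤ β` is expressed as `P x y ≤ β · P(x)`. -/
theorem confidence_efficiency_tradeoff
    {X Y Z : Type*} [Fintype X] [Fintype Y] [Fintype Z] [DecidableEq Y]
    (P : X → Y → ℝ) (hPnonneg : ∀ x y, 0 ≤ P x y)
    (hPsum : ∑ x, ∑ y, P x y = 1)
    (R : Z → ℝ) (hRnonneg : ∀ z, 0 ≤ R z) (hRsum : ∑ z, R z = 1)
    (Γ : Z → X → Finset Y)
    (α β : ℝ) (hβ0 : 0 < β) (hβ1 : β < 1)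
    (herr : ∑ z, ∑ x, ∑ y, R z * P x y * (if y ∈ Γ z x then 0 else 1) ≤ α) :
    ∑ x, ∑ y, (if P x y ≤ β * (∑ y', P x y') then P x y else 0) ≤
      α + β * ∑ z, ∑ x, R z * (∑ y, P x y) * ((Γ z x).card : ℝ) := by
  have hPx : ∀ x, 0 ≤ ∑ y', P x y' := fun x => Finset.sum_nonneg fun y _ => hPnonneg x y
  have key : ∑ x, ∑ y, (if P x y ≤ β * (∑ y', P x y') then P x y else 0)
      = ∑ z, ∑ x, ∑ y, R z * (if P x y ≤ β * (∑ y', P x y') then P x y else 0) := by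
    symm
    simp_rw [← Finset.mul_sum]
    rw [← Finset.sum_mul, hRsum, one_mul]
  rw [key]
  have step : ∀ z x y, R z * (if P x y ≤ β * (∑ y', P x y') then P x y else 0)
      ≤ R z * P x y * (if y ∈ Γ z x then 0 else 1)
        + (if y ∈ Γ z x then R z * (β * ∑ y', P x y') else 0) := by
    intro z x y
    by_cases h : y ∈ Γ z x
    · simp only [h, if_true, mul_zero, zero_add]
      by_cases hc : P x y ≤ β * (∑ y', P x y')
      · simp only [hc, if_true]
        exact mul_le_mul_of_nonneg_left hc (hRnonneg z)
      · simp only [hc, if_false, mul_zero]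
        exact mul_nonneg (hRnonneg z) (mul_nonneg hβ0.le (hPx x))
    · simp only [h, if_false, mul_one, add_zero]
      by_cases hc : P x y ≤ β * (∑ y', P x y') <;> simp [hc]
      · exact mul_nonneg (hRnonneg z) (hPnonneg x y)
  calc ∑ z, ∑ x, ∑ y, R z * (if P x y ≤ β * (∑ y', P x y') then P x y else 0)
      ≤ ∑ z, ∑ x, ∑ y, (R z * P x y * (if y ∈ Γ z x then 0 else 1)
          + (if y ∈ Γ z x then R z * (β * ∑ y', P x y') else 0)) := by
        refine Finset.sum_le_sum fun z _ => Finset.sum_le_sum fun x _ =>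
          Finset.sum_le_sum fun y _ => step z x y
    _ = (∑ z, ∑ x, ∑ y, R z * P x y * (if y ∈ Γ z x then 0 else 1))
          + ∑ z, ∑ x, ∑ y, (if y ∈ Γ z x then R z * (β * ∑ y', P x y') else 0) := by
        simp [Finset.sum_add_distrib]
    _ ≤ α + β * ∑ z, ∑ x, R z * (∑ y, P x y) * ((Γ z x).card : ℝ) := by
        refine add_le_add herr (le_of_eq ?_)
        rw [Finset.mul_sum]
        refine Finset.sum_congr rfl fun z _ => ?_
        rw [Finset.mul_sum]
        refine Finset.sum_congr rfl fun x _ => ?_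
        rw [Finset.sum_ite_mem, Finset.univ_inter, Finset.sum_const, nsmul_eq_mul]
        ring
end

section
/- Let X, Y, Z be finite sets with (X,Y) ~ P and Z independent of (X,Y). Let Q(·|x) be an arbitrary nonnegative measure on Y for each x ∈ X. If a set-valued predictor Γ: Z × X → 2^Y satisfies P(Y ∉ Γ(Z,X)) ≤ α, then for any β > 0: P(P(Y|X) ≤ β·Q(Y|X)) ≤ α + β·E_{X,Z}[Q(Γ(Z,X)|X)], where Q(S|x) = Σ_{y∈S} Q(y|x). -/
/-! On the event `P(y|x) ≤ β Q(y|x)` the mass `P(x, y)` is at most `β Q(y|x) P(x)`, so it is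
bounded by `P(x, y)` off `Γ(z, x)` and by `β Q(y|x) P(x)` on it. Summing over `(x, y)` gives, for
each fixed `z`, the miscoverage plus `β` times the `P(X)`-weighted `Q`-size of `Γ(z, ·)`;
averaging over the independent `Z` gives the bound. -/

open Finset

theorem ite_le_self_zero_le_ite {α : Type*} [Preorder α] [Zero α] [DecidableLE α]
    {a t : α} (ha : 0 ≤ a) (ht : 0 ≤ t) (p : Prop) [Decidable p] :
    (if a ≤ t then a else 0) ≤ if p then t else a := by
  split_ifs <;> first | assumption | exact le_rfl

theorem sum_ite_le_miscoverage_add_mul_size {X Y : Type*} [Fintype X] [Fintype Y]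
    [DecidableEq Y] (P Q : X → Y → ℝ) (hP : ∀ x y, 0 ≤ P x y) (hQ : ∀ x y, 0 ≤ Q x y)
    {β : ℝ} (hβ : 0 ≤ β) (S : X → Finset Y) :
    ∑ x, ∑ y, (if P x y ≤ β * Q x y * (∑ y', P x y') then P x y else 0) ≤
      ∑ x, ∑ y, P x y * (if y ∈ S x then 0 else 1) +
        β * ∑ x, (∑ y, P x y) * ∑ y ∈ S x, Q x y := by
  calc ∑ x, ∑ y, (if P x y ≤ β * Q x y * (∑ y', P x y') then P x y else 0)
      ≤ ∑ x, ∑ y, (P x y * (if y ∈ S x then 0 else 1) +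
          if y ∈ S x then β * Q x y * ∑ y', P x y' else 0) := by
        gcongr with x _ y _
        have hthreshold : 0 ≤ β * Q x y * ∑ y', P x y' :=
          mul_nonneg (mul_nonneg hβ (hQ x y)) (sum_nonneg fun y' _ => hP x y')
        refine (ite_le_self_zero_le_ite (hP x y) hthreshold (y ∈ S x)).trans_eq ?_
        split_ifs <;> ring
    _ = _ := by
        simp only [sum_add_distrib, sum_ite_mem, univ_inter]
        rw [mul_sum]
        congr 1
        refine sum_congr rfl fun x _ => ?_
        rw [mul_sum, mul_sum]
        exact sum_congr rfl fun y _ => by ring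

theorem confidence_efficiency_tradeoff_general_measure_general
    {X Y Z : Type*} [Fintype X] [Fintype Y] [Fintype Z] [DecidableEq Y]
    (P : X → Y → ℝ) (hPnonneg : ∀ x y, 0 ≤ P x y)
    (Q : X → Y → ℝ) (hQnonneg : ∀ x y, 0 ≤ Q x y)
    (R : Z → ℝ) (hRnonneg : ∀ z, 0 ≤ R z) (hRsum : ∑ z, R z = 1)
    (Γ : Z → X → Finset Y)
    (α β : ℝ) (hβ0 : 0 < β)
    (herr : ∑ z, ∑ x, ∑ y, R z * P x y * (if y ∈ Γ z x then 0 else 1) ≤ α) :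
    ∑ x, ∑ y, (if P x y ≤ β * Q x y * (∑ y', P x y') then P x y else 0) ≤
      α + β * ∑ z, ∑ x, R z * (∑ y, P x y) * (∑ y ∈ Γ z x, Q x y) := by
  calc ∑ x, ∑ y, (if P x y ≤ β * Q x y * (∑ y', P x y') then P x y else 0)
      = ∑ z, R z * ∑ x, ∑ y, (if P x y ≤ β * Q x y * (∑ y', P x y') then P x y else 0) := by
        rw [← sum_mul, hRsum, one_mul]
    _ ≤ ∑ z, R z * (∑ x, ∑ y, P x y * (if y ∈ Γ z x then 0 else 1) +
          β * ∑ x, (∑ y, P x y) * ∑ y ∈ Γ z x, Q x y) := by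
        gcongr with z _
        · exact hRnonneg z
        · exact sum_ite_le_miscoverage_add_mul_size P Q hPnonneg hQnonneg hβ0.le (Γ z)
    _ = ∑ z, ∑ x, ∑ y, R z * P x y * (if y ∈ Γ z x then 0 else 1) +
          β * ∑ z, ∑ x, R z * (∑ y, P x y) * (∑ y ∈ Γ z x, Q x y) := by
        simp only [mul_add, sum_add_distrib, mul_left_comm (R _) β, ← mul_sum]
        congr 2
        · simp only [mul_sum, mul_assoc]
        · exact sum_congr rfl fun z _ => by rw [mul_sum]; simp only [mul_assoc]
    _ ≤ _ := by gcongr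

/-- Generalized information-spectrum bound with an arbitrary nonnegative
measure `Q(·|x)` on `Y`: if `(X,Y) ~ P`, `Z ~ R` independent of `(X,Y)`, and
`P(Y ∉ Γ(Z,X)) ≤ α`, then for any `β > 0`,
`P(P(Y|X) ≤ β·Q(Y|X)) ≤ α + β · E_{X,Z}[Q(Γ(Z,X)|X)]`.
The event `P(Y|X) ≤ β·Q(Y|X)` is expressed as `P x y ≤ β · Q x y · P(x)`, and
`Q(S|x) = ∑_{y ∈ S} Q x y`. -/
theorem confidence_efficiency_tradeoff_general_measure
    {X Y Z : Type*} [Fintype X] [Fintype Y] [Fintype Z] [DecidableEq Y]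
    (P : X → Y → ℝ) (hPnonneg : ∀ x y, 0 ≤ P x y)
    (hPsum : ∑ x, ∑ y, P x y = 1)
    (Q : X → Y → ℝ) (hQnonneg : ∀ x y, 0 ≤ Q x y)
    (R : Z → ℝ) (hRnonneg : ∀ z, 0 ≤ R z) (hRsum : ∑ z, R z = 1)
    (Γ : Z → X → Finset Y)
    (α β : ℝ) (hβ0 : 0 < β)
    (herr : ∑ z, ∑ x, ∑ y, R z * P x y * (if y ∈ Γ z x then 0 else 1) ≤ α) :
    ∑ x, ∑ y, (if P x y ≤ β * Q x y * (∑ y', P x y') then P x y else 0) ≤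
      α + β * ∑ z, ∑ x, R z * (∑ y, P x y) * (∑ y ∈ Γ z x, Q x y) :=
  confidence_efficiency_tradeoff_general_measure_general P hPnonneg Q hQnonneg R hRnonneg hRsum Γ α
    β hβ0 herr
end

section
/- Let (X_i, Y_i), i = 1,...,n be i.i.d. pairs from a finite joint distribution P with conditional entropy H(Y|X). Suppose a sequence of set-valued predictors Γ_n ⊆ Y^n satisfies P((Y_1,...,Y_n) ∉ Γ_n(X_1,...,X_n)) ≤ α_n with liminf_{n→∞}(1 − α_n) > 0. Then liminf_{n→∞} (1/n)·log E[|Γ_n(X_1,...,X_n)|] ≥ H(Y|X). -/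
/-!
Write `Lₙ(x, y) = ∑ᵢ -log P(yᵢ | xᵢ)`: under `Pⁿ` it is a sum of `n` i.i.d. terms with mean
`H = H(Y|X)` and some variance `σ²`. Split the coverage event `y ∈ Γₙ(x)` according to whether
`Lₙ ≤ n (H - ε)`. By Chebyshev the first part has probability at most `σ² / (n ε²)`. On the second
part `Pⁿ(y | x) ≤ e^{-n (H - ε)}`, so its probability is at most `e^{-n (H - ε)} E|Γₙ(X)|`. As the
coverage stays above some `c > 0`, eventually `E|Γₙ(X)| ≥ (c / 4) e^{n (H - ε)}`, and `ε > 0` is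
arbitrary.

A sum over `f : ι → A` weighted by `∏ k, w (f k)` is an expectation for an i.i.d. sample from `w`.
-/

open Finset Filter Real Topology

theorem Fintype.prod_mulSingle_apply {ι A M : Type*} [Fintype ι] [DecidableEq ι] [CommMonoid M]
    (i : ι) (u : A → M) (f : ι → A) :
    ∏ k, (Pi.mulSingle i u : ι → A → M) k (f k) = u (f i) := by
  rw [Fintype.prod_eq_single i (fun k hk => by simp [hk])]
  simp

theorem Fintype.sum_arrow_prod {ι X Y M : Type*} [Fintype ι] [DecidableEq ι] [Fintype X]
    [Fintype Y] [AddCommMonoid M] (G : (ι → X) → (ι → Y) → M) :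
    ∑ f : ι → X × Y, G (fun i => (f i).1) (fun i => (f i).2) = ∑ xs, ∑ ys, G xs ys := by
  rw [← Fintype.sum_prod_type']
  exact Fintype.sum_equiv (Equiv.arrowProdEquivProdArrow ι (fun _ => X) (fun _ => Y)) _ _
    fun _ => rfl

theorem sum_le_sum_mul_sq_div_sq {B : Type*} [Fintype B] {p s : B → ℝ} (hp : ∀ b, 0 ≤ p b)
    {S : Finset B} {t : ℝ} (ht : 0 < t) (hS : ∀ b ∈ S, t ≤ |s b|) :
    ∑ b ∈ S, p b ≤ (∑ b, p b * s b ^ 2) / t ^ 2 := by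
  rw [sum_div]
  calc ∑ b ∈ S, p b ≤ ∑ b ∈ S, p b * s b ^ 2 / t ^ 2 := by
        refine sum_le_sum fun b hb => ?_
        rw [mul_div_assoc]
        refine le_mul_of_one_le_right (hp b) ((one_le_div (by positivity)).2 ?_)
        exact sq_le_sq.2 (by rw [abs_of_pos ht]; exact hS b hb)
    _ ≤ ∑ b, p b * s b ^ 2 / t ^ 2 :=
        sum_le_sum_of_subset_of_nonneg (subset_univ S) fun b _ _ => by have := hp b; positivity

theorem sum_le_sum_filter_add_exp_mul_sum {B : Type*} {p r L : B → ℝ}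
    (hr : ∀ b, 0 ≤ r b) (hpr : ∀ b, p b ≤ r b * exp (-L b)) (S : Finset B) (τ : ℝ) :
    ∑ b ∈ S, p b ≤ ∑ b ∈ S with L b ≤ τ, p b + exp (-τ) * ∑ b ∈ S, r b := by
  rw [← sum_filter_add_sum_filter_not S (L · ≤ τ) p, mul_sum]
  refine add_le_add le_rfl ?_
  calc ∑ b ∈ S with ¬L b ≤ τ, p b ≤ ∑ b ∈ S with ¬L b ≤ τ, exp (-τ) * r b := by
        refine sum_le_sum fun b hb => (hpr b).trans ?_
        rw [mul_comm]
        have hτ : τ < L b := not_le.1 (mem_filter.1 hb).2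
        exact mul_le_mul_of_nonneg_right (exp_le_exp.2 (neg_le_neg hτ.le)) (hr b)
    _ ≤ ∑ b ∈ S, exp (-τ) * r b :=
        sum_le_sum_of_subset_of_nonneg (filter_subset _ S) fun b _ _ => by have := hr b; positivity

section ProductWeight

variable {ι A : Type*} [Fintype ι] [DecidableEq ι] [Fintype A] {w : A → ℝ}

theorem sum_prod_weight_mul_prod (w : A → ℝ) (c : ι → A → ℝ) :
    ∑ f : ι → A, (∏ k, w (f k)) * ∏ k, c k (f k) = ∏ k, ∑ a, w a * c k a := by
  simp only [Fintype.prod_sum, prod_mul_distrib]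

theorem sum_prod_weight_mul_apply (hw : ∑ a, w a = 1) (u : A → ℝ) (i : ι) :
    ∑ f : ι → A, (∏ k, w (f k)) * u (f i) = ∑ a, w a * u a := by
  have hc (k : ι) : ∑ a, w a * (Pi.mulSingle i u : ι → A → ℝ) k a =
      (Pi.mulSingle i (∑ a, w a * u a) : ι → ℝ) k := by
    rcases eq_or_ne k i with rfl | hk <;> simp [*]
  simpa only [Fintype.prod_mulSingle_apply, hc, Fintype.prod_pi_mulSingle'] using
    sum_prod_weight_mul_prod w (Pi.mulSingle i u)

theorem sum_prod_weight_mul_apply_mul_apply (hw : ∑ a, w a = 1) (u v : A → ℝ) {i j : ι}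
    (hij : i ≠ j) :
    ∑ f : ι → A, (∏ k, w (f k)) * (u (f i) * v (f j)) = (∑ a, w a * u a) * ∑ a, w a * v a := by
  have hc (k : ι) :
      ∑ a, w a * ((Pi.mulSingle i u : ι → A → ℝ) k a * (Pi.mulSingle j v : ι → A → ℝ) k a) =
        (Pi.mulSingle i (∑ a, w a * u a) : ι → ℝ) k *
          (Pi.mulSingle j (∑ a, w a * v a) : ι → ℝ) k := by
    rcases eq_or_ne k i with rfl | hki
    · simp [hij]
    · rcases eq_or_ne k j with rfl | hkj <;> simp [*]
  simpa only [prod_mul_distrib, Fintype.prod_mulSingle_apply, hc, Fintype.prod_pi_mulSingle'] using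
    sum_prod_weight_mul_prod w fun k a =>
      (Pi.mulSingle i u : ι → A → ℝ) k a * (Pi.mulSingle j v : ι → A → ℝ) k a

theorem sum_prod_weight_mul_sum_sq (hw : ∑ a, w a = 1) {g : A → ℝ} (hg : ∑ a, w a * g a = 0) :
    ∑ f : ι → A, (∏ k, w (f k)) * (∑ i, g (f i)) ^ 2 = Fintype.card ι * ∑ a, w a * g a ^ 2 := by
  have hij (i j : ι) : ∑ f : ι → A, (∏ k, w (f k)) * (g (f i) * g (f j)) =
      if i = j then ∑ a, w a * g a ^ 2 else 0 := by
    split_ifs with h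
    · subst h; simpa only [sq] using sum_prod_weight_mul_apply hw (fun a => g a * g a) i
    · rw [sum_prod_weight_mul_apply_mul_apply hw g g h, hg, zero_mul]
  calc ∑ f : ι → A, (∏ k, w (f k)) * (∑ i, g (f i)) ^ 2
      = ∑ i, ∑ j, ∑ f : ι → A, (∏ k, w (f k)) * (g (f i) * g (f j)) := by
        simp_rw [sq, sum_mul_sum, mul_sum]
        rw [sum_comm]
        exact sum_congr rfl fun i _ => sum_comm
    _ = Fintype.card ι * ∑ a, w a * g a ^ 2 := by simp [hij]

end ProductWeight

section ConditionalEntropy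

variable {X Y : Type*} [Fintype Y]

/-- `-log P(y | x)`; it is `0` where `P x y = 0`, through the junk value `log 0 = 0`. -/
noncomputable def infoDensity (P : X → Y → ℝ) (x : X) (y : Y) : ℝ :=
  -log (P x y / ∑ y', P x y')

theorem le_sum_mul_exp_neg_infoDensity {P : X → Y → ℝ} (hP : ∀ x y, 0 ≤ P x y) (x : X) (y : Y) :
    P x y ≤ (∑ y', P x y') * exp (-infoDensity P x y) := by
  rcases (hP x y).eq_or_lt with h0 | hpos
  · simp only [infoDensity, ← h0, zero_div, log_zero, neg_zero, exp_zero, mul_one]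
    exact sum_nonneg fun y' _ => hP x y'
  · have hq : 0 < ∑ y', P x y' := hpos.trans_le (single_le_sum (fun y' _ => hP x y') (mem_univ y))
    rw [infoDensity, neg_neg, exp_log (div_pos hpos hq), mul_div_cancel₀ _ hq.ne']

theorem prod_le_prod_sum_mul_exp_neg_sum_infoDensity {ι : Type*} [Fintype ι] {P : X → Y → ℝ}
    (hP : ∀ x y, 0 ≤ P x y) (xs : ι → X) (ys : ι → Y) :
    ∏ i, P (xs i) (ys i) ≤
      (∏ i, ∑ y, P (xs i) y) * exp (-∑ i, infoDensity P (xs i) (ys i)) := by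
  rw [← sum_neg_distrib, exp_sum, ← prod_mul_distrib]
  exact prod_le_prod (fun i _ => hP _ _) fun i _ => le_sum_mul_exp_neg_infoDensity hP _ _

variable [Fintype X]

noncomputable def condEntropy (P : X → Y → ℝ) : ℝ :=
  ∑ x, ∑ y, P x y * infoDensity P x y

noncomputable def infoVariance (P : X → Y → ℝ) : ℝ :=
  ∑ x, ∑ y, P x y * (infoDensity P x y - condEntropy P) ^ 2

variable {ι : Type*} [Fintype ι] [DecidableEq ι]

noncomputable def expectedCard (P : X → Y → ℝ) (Γ : (ι → X) → Finset (ι → Y)) : ℝ :=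
  ∑ xs : ι → X, (∏ i, ∑ y, P (xs i) y) * ((Γ xs).card : ℝ)

noncomputable def coverage [DecidableEq Y] (P : X → Y → ℝ) (Γ : (ι → X) → Finset (ι → Y)) : ℝ :=
  ∑ xs : ι → X, ∑ ys : ι → Y, (∏ i, P (xs i) (ys i)) * (if ys ∈ Γ xs then 1 else 0)

variable {P : X → Y → ℝ}

theorem sum_sum_prod_mul_sum_infoDensity_sub_sq (hPsum : ∑ x, ∑ y, P x y = 1) :
    ∑ xs : ι → X, ∑ ys : ι → Y, (∏ i, P (xs i) (ys i)) *
        (∑ i, infoDensity P (xs i) (ys i) - Fintype.card ι * condEntropy P) ^ 2 =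
      Fintype.card ι * infoVariance P := by
  have hw : ∑ a : X × Y, P a.1 a.2 = 1 := by rwa [Fintype.sum_prod_type]
  have hg : ∑ a : X × Y, P a.1 a.2 * (infoDensity P a.1 a.2 - condEntropy P) = 0 := by
    simp only [mul_sub, sum_sub_distrib, ← sum_mul, hw, one_mul, Fintype.sum_prod_type]
    rw [condEntropy, sub_self]
  have h := sum_prod_weight_mul_sum_sq (ι := ι) hw hg
  rw [Fintype.sum_prod_type] at h
  rw [← Fintype.sum_arrow_prod, infoVariance, ← h]
  simp [sum_sub_distrib]

theorem coverage_le_infoVariance_div_add_exp_mul_expectedCard (hP : ∀ x y, 0 ≤ P x y)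
    (hPsum : ∑ x, ∑ y, P x y = 1) [DecidableEq Y] [Nonempty ι] (Γ : (ι → X) → Finset (ι → Y))
    {ε : ℝ} (hε : 0 < ε) :
    coverage P Γ ≤ infoVariance P / (Fintype.card ι * ε ^ 2) +
      exp (-(Fintype.card ι * (condEntropy P - ε))) * expectedCard P Γ := by
  set n : ℝ := (Fintype.card ι : ℝ)
  have hn : 0 < n := Nat.cast_pos.2 Fintype.card_pos
  set H := condEntropy P
  have hbound (xs : ι → X) : ∑ ys ∈ Γ xs, ∏ i, P (xs i) (ys i) ≤
      (∑ ys : ι → Y, (∏ i, P (xs i) (ys i)) * (∑ i, infoDensity P (xs i) (ys i) - n * H) ^ 2) /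
          (n * ε) ^ 2 +
        exp (-(n * (H - ε))) * ((∏ i, ∑ y, P (xs i) y) * (Γ xs).card) := by
    refine (sum_le_sum_filter_add_exp_mul_sum
      (fun _ => prod_nonneg fun i _ => sum_nonneg fun y _ => hP _ _)
      (prod_le_prod_sum_mul_exp_neg_sum_infoDensity hP xs) (Γ xs) (n * (H - ε))).trans
      (add_le_add ?_ ?_)
    · refine sum_le_sum_mul_sq_div_sq (fun ys => prod_nonneg fun i _ => hP _ _) (by positivity)
        fun ys hys => ?_
      have hL := (mem_filter.1 hys).2
      rw [abs_sub_comm]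
      exact le_abs.2 (Or.inl (by linarith))
    · rw [sum_const, nsmul_eq_mul, mul_comm (_ : ℝ) (∏ i, _)]
  calc coverage P Γ
      = ∑ xs : ι → X, ∑ ys ∈ Γ xs, ∏ i, P (xs i) (ys i) := by
        simp only [coverage, mul_ite, mul_one, mul_zero, Fintype.sum_ite_mem]
    _ ≤ _ := sum_le_sum fun xs _ => hbound xs
    _ = _ := by
        rw [sum_add_distrib, ← sum_div, sum_sum_prod_mul_sum_infoDensity_sub_sq hPsum, ← mul_sum,
          expectedCard]
        field_simp
        ring

theorem coverage_nonneg (hP : ∀ x y, 0 ≤ P x y) [DecidableEq Y] (Γ : (ι → X) → Finset (ι → Y)) :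
    0 ≤ coverage P Γ :=
  sum_nonneg fun _ _ => sum_nonneg fun _ _ =>
    mul_nonneg (prod_nonneg fun _ _ => hP _ _) (by split_ifs <;> norm_num)

theorem expectedCard_nonneg (hP : ∀ x y, 0 ≤ P x y) (Γ : (ι → X) → Finset (ι → Y)) :
    0 ≤ expectedCard P Γ :=
  sum_nonneg fun _ _ =>
    mul_nonneg (prod_nonneg fun _ _ => sum_nonneg fun _ _ => hP _ _) (Nat.cast_nonneg _)

theorem expectedCard_le_pow (hP : ∀ x y, 0 ≤ P x y) (hPsum : ∑ x, ∑ y, P x y = 1)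
    (Γ : (ι → X) → Finset (ι → Y)) :
    expectedCard P Γ ≤ (Fintype.card Y : ℝ) ^ Fintype.card ι := by
  have hcard (xs : ι → X) : ((Γ xs).card : ℝ) ≤ (Fintype.card Y : ℝ) ^ Fintype.card ι := by
    exact_mod_cast (card_le_univ (Γ xs)).trans_eq Fintype.card_fun
  calc expectedCard P Γ
      ≤ ∑ xs : ι → X, (∏ i, ∑ y, P (xs i) y) * (Fintype.card Y : ℝ) ^ Fintype.card ι :=
        sum_le_sum fun xs _ => mul_le_mul_of_nonneg_left (hcard xs)
          (prod_nonneg fun i _ => sum_nonneg fun y _ => hP _ _)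
    _ = (Fintype.card Y : ℝ) ^ Fintype.card ι := by
        rw [← sum_mul, ← Fintype.prod_sum (fun (_ : ι) x => ∑ y, P x y), hPsum, prod_const_one,
          one_mul]

end ConditionalEntropy

theorem log_div_le_log_of_le_pow {E : ℝ} {k n : ℕ} (hE : 0 ≤ E) (hEk : E ≤ (k : ℝ) ^ n) :
    log E / n ≤ log k := by
  rcases hE.eq_or_lt with rfl | hpos
  · simpa using log_natCast_nonneg k
  · rcases n.eq_zero_or_pos with rfl | hn
    · simpa using log_natCast_nonneg k
    · rw [div_le_iff₀ (Nat.cast_pos.2 hn), mul_comm, ← log_pow]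
      exact log_le_log hpos hEk

theorem exists_pos_eventually_mul_exp_le {cov E a : ℕ → ℝ} {r : ℝ} (hcov0 : ∀ n, 0 ≤ cov n)
    (hcov : 0 < liminf cov atTop) (ha : Tendsto a atTop (𝓝 0))
    (hle : ∀ᶠ n in atTop, cov n ≤ a n + exp (-(n * r)) * E n) :
    ∃ c > 0, ∀ᶠ n : ℕ in atTop, c * exp (n * r) ≤ E n := by
  set c := liminf cov atTop
  have hcov_gt : ∀ᶠ n in atTop, c / 2 < cov n :=
    eventually_lt_of_lt_liminf (half_lt_self hcov) ⟨0, eventually_map.2 (.of_forall hcov0)⟩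
  have ha_lt : ∀ᶠ n in atTop, a n < c / 4 := ha.eventually (gt_mem_nhds (by positivity))
  refine ⟨c / 4, by positivity, ?_⟩
  filter_upwards [hle, hcov_gt, ha_lt] with n hle hcov_gt ha_lt
  have hexp : exp (-(n * r)) * exp (n * r) = 1 := by rw [← exp_add, neg_add_cancel, exp_zero]
  calc c / 4 * exp (n * r) ≤ exp (-(n * r)) * E n * exp (n * r) :=
        mul_le_mul_of_nonneg_right (by linarith) (exp_pos _).le
    _ = E n := by rw [mul_right_comm, hexp, one_mul]

theorem le_liminf_log_div_of_eventually_mul_exp_le {E : ℕ → ℝ} {r : ℝ}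
    (hbdd : IsBoundedUnder (· ≤ ·) atTop fun n => log (E n) / n)
    (hE : ∀ ε > 0, ∃ c > 0, ∀ᶠ n : ℕ in atTop, c * exp (n * (r - ε)) ≤ E n) :
    r ≤ liminf (fun n => log (E n) / n) atTop := by
  refine le_of_forall_pos_le_add fun ε hε => ?_
  obtain ⟨c, hc, hcE⟩ := hE (ε / 2) (half_pos hε)
  have hlog_c : ∀ᶠ n : ℕ in atTop, -(ε / 2) < log c / n :=
    (tendsto_const_div_atTop_nhds_zero_nat (log c)).eventually (lt_mem_nhds (by linarith))
  suffices r - ε ≤ liminf (fun n => log (E n) / n) atTop by linarith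
  refine le_liminf_of_le hbdd.isCoboundedUnder_ge ?_
  filter_upwards [hcE, hlog_c, eventually_gt_atTop 0] with n hcE hlog_c hn
  have hn : (0 : ℝ) < n := Nat.cast_pos.2 hn
  have hlogE : log c + n * (r - ε / 2) ≤ log (E n) := by
    rw [← log_exp (n * (r - ε / 2)), ← log_mul hc.ne' (exp_pos _).ne']
    exact log_le_log (by positivity) hcE
  rw [lt_div_iff₀ hn] at hlog_c
  rw [le_div_iff₀ hn]
  linarith

/-- For i.i.d. pairs `(X_i,Y_i) ~ P` on finite alphabets, if a sequence
of set-valued predictors `Γ n : X^n → 2^{Y^n}` has coverage probability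
`cov n = P((Y_1,…,Y_n) ∈ Γ n (X_1,…,X_n))` with `liminf_n cov n > 0` (non-trivial
asymptotic confidence), then
`liminf_n (1/n)·log E[|Γ n (X_1,…,X_n)|] ≥ H(Y|X)`,
where `H(Y|X) = -∑_{x,y} P(x,y) log (P(x,y)/P(x))`. -/
theorem efficiency_rate_ge_conditional_entropy
    {X Y : Type*} [Fintype X] [Fintype Y] [DecidableEq Y]
    (P : X → Y → ℝ) (hPnonneg : ∀ x y, 0 ≤ P x y)
    (hPsum : ∑ x, ∑ y, P x y = 1)
    (Γ : (n : ℕ) → ((Fin n → X) → Finset (Fin n → Y)))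
    (cov : ℕ → ℝ)
    (hcov : ∀ n, cov n = ∑ xs : Fin n → X, ∑ ys : Fin n → Y,
        (∏ i, P (xs i) (ys i)) * (if ys ∈ Γ n xs then 1 else 0))
    (hconf : 0 < Filter.liminf (fun n => cov n) Filter.atTop) :
    (-∑ x, ∑ y, P x y * Real.log (P x y / ∑ y', P x y')) ≤
      Filter.liminf (fun n =>
        Real.log (∑ xs : Fin n → X,
          (∏ i, ∑ y, P (xs i) y) * (((Γ n xs).card : ℝ))) / n) Filter.atTop := by
  have hH : -∑ x, ∑ y, P x y * log (P x y / ∑ y', P x y') = condEntropy P := by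
    simp [condEntropy, infoDensity, sum_neg_distrib]
  have hcov' (n : ℕ) : cov n = coverage P (Γ n) := hcov n
  rw [hH]
  -- a `liminf` in `ℝ` is junk unless the sequence is bounded above, whence `|Γₙ| ≤ |Y| ^ n`
  refine le_liminf_log_div_of_eventually_mul_exp_le (E := fun n => expectedCard P (Γ n))
    ⟨log (Fintype.card Y), eventually_map.2 (.of_forall fun n => ?_)⟩ fun ε hε => ?_
  · simpa using log_div_le_log_of_le_pow (expectedCard_nonneg hPnonneg (Γ n))
      (expectedCard_le_pow hPnonneg hPsum (Γ n))
  refine exists_pos_eventually_mul_exp_le (fun n => hcov' n ▸ coverage_nonneg hPnonneg (Γ n)) hconf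
    ((tendsto_const_nhds (x := infoVariance P)).div_atTop
      (tendsto_natCast_atTop_atTop.atTop_mul_const (pow_pos hε 2))) ?_
  filter_upwards [eventually_gt_atTop 0] with n hn
  have : Nonempty (Fin n) := ⟨⟨0, hn⟩⟩
  simpa [hcov' n] using
    coverage_le_infoVariance_div_add_exp_mul_expectedCard hPnonneg hPsum (Γ n) hε
end

section
/- Let X be a finite alphabet and P a type of denominator n (i.e., P ∈ P_n). Then the size of the type class T(P) = {x ∈ X^n : T_x = P} satisfies (n+1)^{−|X|}·exp(n·H(P)) ≤ |T(P)| ≤ exp(n·H(P)). -/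
/-!
Write `c a = n P(a)`. By the multinomial theorem, `n ^ n = (∑ₐ c a) ^ n` is the sum over the
at most `(n + 1) ^ |X|` count vectors `k` of total `n` of `multinomial k * ∏ₐ c a ^ k a`, and the
term `k = c` is the largest one, because `c! c^m ≤ m! c^c` for all `c, m`. Since
`|T(P)| = multinomial c` and `exp (n H(P)) = n ^ n / ∏ₐ c a ^ c a`, the upper bound says that one
term is at most the sum and the lower bound that the largest term is at least the average.
-/

open Finset Equiv Nat Real

theorem Nat.factorial_mul_pow_le_factorial_mul_pow (c m : ℕ) : c ! * c ^ m ≤ m ! * c ^ c := by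
  rcases le_total c m with h | h
  · calc c ! * c ^ m = c ! * c ^ (m - c) * c ^ c := by
          rw [mul_assoc, ← pow_add, Nat.sub_add_cancel h]
      _ ≤ m ! * c ^ c := Nat.mul_le_mul_right _ (factorial_mul_pow_sub_le_factorial h)
  · calc c ! * c ^ m = m ! * c.descFactorial (c - m) * c ^ m := by
          rw [← factorial_mul_descFactorial (Nat.sub_le c m), Nat.sub_sub_self h]
      _ ≤ m ! * c ^ (c - m) * c ^ m := by gcongr; exact descFactorial_le_pow c _
      _ = m ! * c ^ c := by rw [mul_assoc, ← pow_add, Nat.sub_add_cancel h]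

section Multinomial

variable {X : Type*} [Fintype X]

theorem Nat.multinomial_mul_prod_pow_le (c k : X → ℕ) (hk : ∑ a, k a = ∑ a, c a) :
    multinomial univ k * ∏ a, c a ^ k a ≤ multinomial univ c * ∏ a, c a ^ c a := by
  have hpos : 0 < (∏ a, (k a)!) * ∏ a, (c a)! := by positivity
  refine Nat.le_of_mul_le_mul_right ?_ hpos
  calc multinomial univ k * (∏ a, c a ^ k a) * ((∏ a, (k a)!) * ∏ a, (c a)!)
      = ((∏ a, (k a)!) * multinomial univ k) * ∏ a, ((c a)! * c a ^ k a) := by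
        rw [prod_mul_distrib]; ring
    _ ≤ ((∏ a, (c a)!) * multinomial univ c) * ∏ a, ((k a)! * c a ^ c a) := by
        rw [multinomial_spec, multinomial_spec, hk]
        exact Nat.mul_le_mul_left _
          (prod_le_prod' fun a _ => factorial_mul_pow_le_factorial_mul_pow (c a) (k a))
    _ = multinomial univ c * (∏ a, c a ^ c a) * ((∏ a, (k a)!) * ∏ a, (c a)!) := by
        rw [prod_mul_distrib]; ring

theorem Finset.card_piAntidiag_univ_le [DecidableEq X] (n : ℕ) :
    #(piAntidiag (univ : Finset X) n) ≤ (n + 1) ^ Fintype.card X := by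
  calc #(piAntidiag (univ : Finset X) n) ≤ #(Fintype.piFinset fun _ : X => range (n + 1)) := by
        refine card_le_card fun k hk => ?_
        rw [mem_piAntidiag] at hk
        simpa [Nat.lt_succ_iff, ← hk.1] using fun a => single_le_sum (by simp) (mem_univ a)
    _ = (n + 1) ^ Fintype.card X := by simp

theorem Nat.multinomial_mul_prod_pow_self_le [DecidableEq X] (c : X → ℕ) :
    multinomial univ c * ∏ a, c a ^ c a ≤ (∑ a, c a) ^ ∑ a, c a := by
  rw [sum_pow_eq_sum_piAntidiag]
  exact single_le_sum (f := fun k => multinomial univ k * ∏ a, c a ^ k a)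
    (fun _ _ => Nat.zero_le _) (by simp)

theorem Nat.pow_sum_le_multinomial_mul_prod_pow_self [DecidableEq X] (c : X → ℕ) :
    (∑ a, c a) ^ ∑ a, c a ≤
      (∑ a, c a + 1) ^ Fintype.card X * (multinomial univ c * ∏ a, c a ^ c a) := by
  rw [sum_pow_eq_sum_piAntidiag]
  calc ∑ k ∈ piAntidiag univ (∑ a, c a), multinomial univ k * ∏ a, c a ^ k a
      ≤ ∑ _k ∈ piAntidiag univ (∑ a, c a), multinomial univ c * ∏ a, c a ^ c a :=
        sum_le_sum fun k hk => multinomial_mul_prod_pow_le c k (mem_piAntidiag.mp hk).1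
    _ ≤ _ := by
        rw [sum_const, smul_eq_mul]
        exact Nat.mul_le_mul_right _ (card_piAntidiag_univ_le _)

end Multinomial

theorem Real.exp_mul_log_self_natCast (m : ℕ) : exp (m * log m) = (m : ℝ) ^ m := by
  rcases Nat.eq_zero_or_pos m with rfl | hm
  · simp
  · rw [exp_nat_mul, exp_log (by exact_mod_cast hm)]

theorem Real.exp_nat_mul_entropy_mul_prod_pow_self {X : Type*} [Fintype X] {c : X → ℕ} {n : ℕ}
    (hc : ∑ a, c a = n) :
    exp (n * -∑ a, (c a / n : ℝ) * log (c a / n)) * ∏ a, (c a : ℝ) ^ c a = (n : ℝ) ^ n := by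
  have hterm (a : X) : (n : ℝ) * ((c a / n) * log (c a / n)) = c a * log (c a) - c a * log n := by
    rcases Nat.eq_zero_or_pos (c a) with h | h
    · simp [h]
    · have hn : (0 : ℝ) < n := by
        exact_mod_cast h.trans_le (hc ▸ single_le_sum (by simp) (mem_univ a))
      rw [log_div (by positivity) hn.ne']
      field_simp
  have hlin : (n : ℝ) * -∑ a, (c a / n : ℝ) * log (c a / n) = n * log n - ∑ a, c a * log (c a) := by
    rw [mul_neg, mul_sum, sum_congr rfl fun a _ => hterm a, sum_sub_distrib, ← sum_mul, ← hc]
    push_cast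
    ring
  simp_rw [hlin, exp_sub, exp_sum, exp_mul_log_self_natCast]
  exact div_mul_cancel₀ _ (prod_ne_zero_iff.mpr fun a _ => by
    rw [← exp_mul_log_self_natCast]; exact (exp_pos _).ne')

section TypeClass

variable {ι X : Type*} [Fintype ι] [DecidableEq ι] [Fintype X] [DecidableEq X]

variable (ι) in
/-- The type class `T(P)` of the type `P = c / card ι`. -/
def typeClass (c : X → ℕ) : Finset (ι → X) :=
  {x | ∀ a, #{i | x i = a} = c a}

omit [DecidableEq ι] [Fintype X] in
theorem card_filter_comp_perm_eq (x : ι → X) (σ : Perm ι) (a : X) :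
    #{i | x (σ i) = a} = #{i | x i = a} :=
  card_equiv σ (by simp)

omit [DecidableEq ι] [Fintype X] in
theorem exists_perm_comp_eq_of_card_fiber_eq {x y : ι → X}
    (h : ∀ a, Fintype.card {i // x i = a} = Fintype.card {i // y i = a}) :
    ∃ σ : Perm ι, y ∘ σ = x := by
  let f : ∀ a, {i // x i = a} ≃ {i // y i = a} := fun a => Fintype.equivOfCardEq (h a)
  refine ⟨(sigmaFiberEquiv x).symm.trans ((sigmaCongrRight f).trans (sigmaFiberEquiv y)), ?_⟩
  funext i
  exact (f (x i) ⟨i, rfl⟩).2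

theorem typeClass_nonempty {c : X → ℕ} (hc : ∑ a, c a = Fintype.card ι) :
    (typeClass ι c).Nonempty := by
  let e : ι ≃ Σ a, Fin (c a) := Fintype.equivOfCardEq (by simp [hc])
  refine ⟨fun i => (e i).1, mem_filter.mpr ⟨mem_univ _, fun a => ?_⟩⟩
  rw [← Fintype.card_subtype, Fintype.card_congr ((e.subtypeEquiv fun _ => Iff.rfl).trans
    (sigmaSubtype a)), Fintype.card_fin]

theorem mem_typeClass_iff_exists_perm {c : X → ℕ} {x₀ x : ι → X} (hx₀ : x₀ ∈ typeClass ι c) :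
    x ∈ typeClass ι c ↔ ∃ σ : Perm ι, x₀ ∘ σ = x := by
  simp only [typeClass, mem_filter, mem_univ, true_and] at hx₀ ⊢
  constructor
  · intro hx
    exact exists_perm_comp_eq_of_card_fiber_eq fun a => by
      simp only [Fintype.card_subtype, hx, hx₀]
  · rintro ⟨σ, rfl⟩ a
    exact (card_filter_comp_perm_eq x₀ σ a).trans (hx₀ a)

theorem card_perm_comp_eq {c : X → ℕ} {x₀ x : ι → X} (hx₀ : x₀ ∈ typeClass ι c)
    (hx : x ∈ typeClass ι c) : #{σ : Perm ι | x₀ ∘ σ = x} = ∏ a, (c a)! := by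
  obtain ⟨τ, rfl⟩ := (mem_typeClass_iff_exists_perm hx₀).mp hx
  have e : {g : Perm ι // x₀ ∘ g = x₀} ≃ {σ : Perm ι // x₀ ∘ σ = x₀ ∘ τ} :=
    (Equiv.mulRight τ).subtypeEquiv fun g => by
      rw [Equiv.coe_mulRight, Perm.coe_mul, ← Function.comp_assoc,
        τ.surjective.injective_comp_right.eq_iff]
  rw [← Fintype.card_subtype, ← Fintype.card_congr e, DomMulAct.stabilizer_card]
  refine prod_congr rfl fun a _ => ?_
  rw [Fintype.card_subtype]
  exact congrArg _ ((mem_filter.mp hx₀).2 a)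

theorem card_typeClass_mul_prod_factorial {c : X → ℕ} (hc : ∑ a, c a = Fintype.card ι) :
    #(typeClass ι c) * ∏ a, (c a)! = (Fintype.card ι)! := by
  obtain ⟨x₀, hx₀⟩ := typeClass_nonempty hc
  have hmaps : Set.MapsTo (fun σ : Perm ι => x₀ ∘ σ) (univ : Finset (Perm ι)) (typeClass ι c) :=
    fun σ _ => (mem_typeClass_iff_exists_perm hx₀).mpr ⟨σ, rfl⟩
  rw [← Fintype.card_perm, ← Finset.card_univ, card_eq_sum_card_fiberwise hmaps,
    sum_congr rfl fun x hx => card_perm_comp_eq hx₀ hx, sum_const, smul_eq_mul]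

theorem card_typeClass {c : X → ℕ} (hc : ∑ a, c a = Fintype.card ι) :
    #(typeClass ι c) = Nat.multinomial univ c := by
  have h := card_typeClass_mul_prod_factorial hc
  rw [← hc, ← Nat.multinomial_spec, mul_comm] at h
  exact Nat.eq_of_mul_eq_mul_left (by positivity) h

end TypeClass

theorem type_class_size_bounds_general
    {X : Type*} [Fintype X] [DecidableEq X] (n : ℕ)
    (c : X → ℕ) (hc : ∑ a, c a = n)
    (P : X → ℝ) (hP : ∀ a, P a = (c a : ℝ) / n)
    (Hent : ℝ) (hH : Hent = -∑ a, P a * Real.log (P a)) :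
    ((n + 1 : ℝ) ^ Fintype.card X)⁻¹ * Real.exp (n * Hent) ≤
      ((Finset.univ.filter fun x : Fin n → X =>
          ∀ a, (Finset.univ.filter fun i => x i = a).card = c a).card : ℝ) ∧
    ((Finset.univ.filter fun x : Fin n → X =>
        ∀ a, (Finset.univ.filter fun i => x i = a).card = c a).card : ℝ) ≤
      Real.exp (n * Hent) := by
  change _ ≤ (#(typeClass (Fin n) c) : ℝ) ∧ (#(typeClass (Fin n) c) : ℝ) ≤ _
  rw [card_typeClass (by rw [hc, Fintype.card_fin])]
  have hupper := multinomial_mul_prod_pow_self_le c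
  have hlower := pow_sum_le_multinomial_mul_prod_pow_self c
  rw [hc] at hupper hlower
  have hexp : exp (n * Hent) * ∏ a, (c a : ℝ) ^ c a = n ^ n := by
    simp only [hH, hP]
    exact exp_nat_mul_entropy_mul_prod_pow_self hc
  have hprod : 0 < ∏ a, (c a : ℝ) ^ c a := by
    exact_mod_cast prod_pos fun a _ => Nat.pow_self_pos
  constructor
  · rw [inv_mul_le_iff₀ (by positivity)]
    refine le_of_mul_le_mul_right ?_ hprod
    rw [hexp, mul_assoc]
    exact_mod_cast hlower
  · refine le_of_mul_le_mul_right ?_ hprod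
    rw [hexp]
    exact_mod_cast hupper

/-- For a type `P` of denominator `n` (given by counts `c : X → ℕ` with
`∑ₐ c a = n` and `P a = c a / n`), the size of the type class
`T(P) = {x ∈ X^n : T_x = P}` satisfies
`(n+1)^{−|X|}·exp(n·H(P)) ≤ |T(P)| ≤ exp(n·H(P))`. -/
theorem type_class_size_bounds
    {X : Type*} [Fintype X] [DecidableEq X] (n : ℕ) (hn : 0 < n)
    (c : X → ℕ) (hc : ∑ a, c a = n)
    (P : X → ℝ) (hP : ∀ a, P a = (c a : ℝ) / n)
    (Hent : ℝ) (hH : Hent = -∑ a, P a * Real.log (P a)) :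
    ((n + 1 : ℝ) ^ Fintype.card X)⁻¹ * Real.exp (n * Hent) ≤
      ((Finset.univ.filter fun x : Fin n → X =>
          ∀ a, (Finset.univ.filter fun i => x i = a).card = c a).card : ℝ) ∧
    ((Finset.univ.filter fun x : Fin n → X =>
        ∀ a, (Finset.univ.filter fun i => x i = a).card = c a).card : ℝ) ≤
      Real.exp (n * Hent) :=
  type_class_size_bounds_general n c hc P hP Hent hH
end

section
/- Let X be a finite alphabet, X₁ ∈ X^N i.i.d. from P₁ with N = αn, and X_t ∈ X^n i.i.d. from P₁ (independent of X₁). Then for any λ > 0: P(GJS(T_{X₁}, T_{X_t}, α) ≥ λ) ≤ (n+1)^{|X|}·(N+1)^{|X|}·exp(−nλ). -/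
/-!
Group the two sequences by their types `T₁ = c₁/N`, `T₂ = c₂/n`. Their probability under `P₁`
is `∏ P₁(a)^(c₁ a + c₂ a)`, which by Gibbs' inequality is at most the same product with `P₁`
replaced by the joint type `M = (c₁ + c₂)/(N + n)`; and since `N = αn`, `M` is exactly the
mixture `(αT₁ + T₂)/(1 + α)`, so that `∏ M^(c₁+c₂) = exp(-n·GJS(T₁,T₂,α)) ∏ T₁^c₁ ∏ T₂^c₂`.
On the event `GJS ≥ λ` this gives the factor `exp(-nλ)`, and summing `∏ T^c` over all sequences
of length `m` contributes at most the number of types, `(m+1)^|X|`.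
-/

open Finset Real

section Types

variable {X : Type*} [DecidableEq X] {m : ℕ}

def symbolCount (x : Fin m → X) (a : X) : ℕ := #{i | x i = a}

noncomputable def empirical (x : Fin m → X) (a : X) : ℝ := symbolCount x a / m

theorem empirical_nonneg (x : Fin m → X) (a : X) : 0 ≤ empirical x a := by
  unfold empirical; positivity

theorem empirical_pos {x : Fin m → X} {a : X} (h : symbolCount x a ≠ 0) :
    0 < empirical x a := by
  obtain ⟨i, -⟩ := card_ne_zero.1 h
  have := i.pos
  unfold empirical
  have := Nat.pos_of_ne_zero h
  positivity

theorem prod_empirical_nonneg (x : Fin m → X) : 0 ≤ ∏ j, empirical x (x j) :=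
  prod_nonneg fun j _ => empirical_nonneg x (x j)

variable [Fintype X]

theorem prod_comp_eq_prod_pow_symbolCount {M : Type*} [CommMonoid M] (x : Fin m → X)
    (f : X → M) : ∏ j, f (x j) = ∏ a, f a ^ symbolCount x a := by
  rw [← prod_fiberwise_of_maps_to' (fun i _ => mem_univ (x i)) f]
  exact prod_congr rfl fun a _ => prod_const _

theorem sum_symbolCount (x : Fin m → X) : ∑ a, symbolCount x a = m := by
  unfold symbolCount
  rw [← card_eq_sum_card_fiberwise fun i _ => mem_univ (x i), card_univ, Fintype.card_fin]

theorem sum_empirical (hm : 0 < m) (x : Fin m → X) : ∑ a, empirical x a = 1 := by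
  unfold empirical
  rw [← sum_div, ← Nat.cast_sum, sum_symbolCount, div_self (by positivity)]

theorem card_image_empirical_le :
    #(univ.image (empirical : (Fin m → X) → X → ℝ)) ≤ (m + 1) ^ Fintype.card X := by
  have hsub : univ.image (empirical : (Fin m → X) → X → ℝ) ⊆
      (univ : Finset (X → Fin (m + 1))).image fun q a => (q a : ℝ) / m := by
    intro t ht
    obtain ⟨x, -, rfl⟩ := mem_image.1 ht
    refine mem_image.2 ⟨fun a => ⟨symbolCount x a, Nat.lt_succ_of_le ?_⟩, mem_univ _, rfl⟩
    exact (card_filter_le _ _).trans_eq (card_fin m)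
  calc _ ≤ #((univ : Finset (X → Fin (m + 1))).image fun q a => (q a : ℝ) / m) :=
        card_le_card hsub
    _ ≤ Fintype.card (X → Fin (m + 1)) := card_image_le
    _ = (m + 1) ^ Fintype.card X := by simp

theorem sum_prod_empirical_le (hm : 0 < m) :
    ∑ x : Fin m → X, ∏ j, empirical x (x j) ≤ ((m : ℝ) + 1) ^ Fintype.card X := by
  set types := univ.image (empirical : (Fin m → X) → X → ℝ)
  have htypes : ∀ t ∈ types, ∑ a, t a = 1 := by
    intro t ht
    obtain ⟨x, -, rfl⟩ := mem_image.1 ht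
    exact sum_empirical hm x
  have hnonneg : ∀ t ∈ types, ∀ a, 0 ≤ t a := by
    intro t ht a
    obtain ⟨x, -, rfl⟩ := mem_image.1 ht
    exact empirical_nonneg x a
  -- each sequence is bounded by the sum over all realized types `t` of its probability under `t`
  calc ∑ x : Fin m → X, ∏ j, empirical x (x j)
      ≤ ∑ x : Fin m → X, ∑ t ∈ types, ∏ j, t (x j) := by
        gcongr with x
        exact single_le_sum (f := fun t => ∏ j, t (x j))
          (fun t ht => prod_nonneg fun j _ => hnonneg t ht _) (mem_image_of_mem _ (mem_univ x))
    _ = ∑ t ∈ types, (∑ a, t a) ^ m := by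
        rw [sum_comm]
        exact sum_congr rfl fun t _ => (Fintype.sum_pow t m).symm
    _ = #types := by
        rw [sum_congr rfl fun t ht => by rw [htypes t ht, one_pow], sum_const, nsmul_one]
    _ ≤ ((m : ℝ) + 1) ^ Fintype.card X := by exact_mod_cast card_image_empirical_le

end Types

theorem pow_le_div_pow_mul_exp {p K : ℝ} (hp : 0 ≤ p) (hK : 0 < K) (k : ℕ) :
    p ^ k ≤ (k / K) ^ k * exp (K * p - k) := by
  rcases Nat.eq_zero_or_pos k with rfl | hk
  · simpa using one_le_exp (mul_nonneg hK.le hp)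
  have hq : (0 : ℝ) < k / K := by positivity
  -- `y ≤ exp (y - 1)` at `y = p / (k / K)`, raised to the `k`-th power
  have hy : p / (k / K) ≤ exp (p / (k / K) - 1) := by linarith [add_one_le_exp (p / (k / K) - 1)]
  calc p ^ k = (k / K) ^ k * (p / (k / K)) ^ k := by rw [← mul_pow, mul_div_cancel₀ _ hq.ne']
    _ ≤ (k / K) ^ k * exp (p / (k / K) - 1) ^ k := by gcongr
    _ = (k / K) ^ k * exp (K * p - k) := by
        rw [← exp_nat_mul]
        congr 2
        field_simp

theorem prod_pow_le_prod_div_pow {ι : Type*} [Fintype ι] {P : ι → ℝ} (hP : ∀ a, 0 ≤ P a)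
    (hPsum : ∑ a, P a ≤ 1) {k : ι → ℕ} {K : ℕ} (hk : ∑ a, k a = K) (hK : 0 < K) :
    ∏ a, P a ^ k a ≤ ∏ a, ((k a : ℝ) / K) ^ k a := by
  have hKR : (0 : ℝ) < K := by exact_mod_cast hK
  calc ∏ a, P a ^ k a ≤ ∏ a, ((k a : ℝ) / K) ^ k a * exp (K * P a - k a) :=
        prod_le_prod (fun a _ => pow_nonneg (hP a) _) fun a _ => pow_le_div_pow_mul_exp (hP a) hKR _
    _ = (∏ a, ((k a : ℝ) / K) ^ k a) * exp (K * (∑ a, P a - 1)) := by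
        rw [prod_mul_distrib, ← exp_sum, sum_sub_distrib, ← mul_sum, ← Nat.cast_sum, hk, mul_sub,
          mul_one]
    _ ≤ ∏ a, ((k a : ℝ) / K) ^ k a := by
        refine mul_le_of_le_one_right (by positivity) (exp_le_one_iff.2 ?_)
        nlinarith

theorem pow_eq_exp_neg_mul_log_mul_pow {t M : ℝ} {c : ℕ} (h : c ≠ 0 → 0 < t ∧ 0 < M) :
    M ^ c = exp (-(c * log (t / M))) * t ^ c := by
  rcases eq_or_ne c 0 with rfl | hc
  · simp
  obtain ⟨ht, hM⟩ := h hc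
  rw [← mul_neg, ← log_inv, exp_nat_mul, exp_log (by positivity), inv_div, ← mul_pow,
    div_mul_cancel₀ _ ht.ne']

theorem prod_pow_eq_exp_mul_prod_pow {ι : Type*} [Fintype ι] {t M : ι → ℝ} {c : ι → ℕ}
    (h : ∀ a, c a ≠ 0 → 0 < t a ∧ 0 < M a) :
    ∏ a, M a ^ c a = exp (-∑ a, c a * log (t a / M a)) * ∏ a, t a ^ c a := by
  rw [← sum_neg_distrib, exp_sum, ← prod_mul_distrib]
  exact prod_congr rfl fun a _ => pow_eq_exp_neg_mul_log_mul_pow (h a)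

section GeneralizedJensenShannon

variable {X : Type*} [Fintype X]

noncomputable def genJSDiv (α : ℝ) (p q : X → ℝ) : ℝ :=
  α * ∑ a, p a * log (p a / ((α * p a + q a) / (1 + α))) +
    ∑ a, q a * log (q a / ((α * p a + q a) / (1 + α)))

theorem natCast_mul_genJSDiv_of_counts {N n : ℕ} (hn : 0 < n) {α : ℝ} (hα : 0 < α)
    (hN : (N : ℝ) = α * n) (c₁ c₂ : X → ℕ) :
    n * genJSDiv α (fun a => (c₁ a : ℝ) / N) (fun a => (c₂ a : ℝ) / n) =
      ∑ a, c₁ a * log ((c₁ a / N) / ((c₁ a + c₂ a) / (N + n))) +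
        ∑ a, c₂ a * log ((c₂ a / n) / ((c₁ a + c₂ a) / (N + n))) := by
  have hnR : (n : ℝ) ≠ 0 := by positivity
  have hmix : ∀ a, (α * ((c₁ a : ℝ) / N) + c₂ a / n) / (1 + α) = (c₁ a + c₂ a) / (N + n) := by
    intro a
    rw [hN]
    field_simp
    ring
  simp only [genJSDiv, hmix, mul_add, mul_sum]
  congr 1 <;> refine sum_congr rfl fun a _ => ?_
  · rw [hN]; field_simp
  · field_simp

end GeneralizedJensenShannon

theorem prod_mul_prod_le_exp_neg_genJSDiv {X : Type*} [Fintype X] [DecidableEq X] {N n : ℕ}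
    (hn : 0 < n) {α : ℝ} (hα : 0 < α) (hN : (N : ℝ) = α * n) {P : X → ℝ} (hP : ∀ a, 0 ≤ P a)
    (hPsum : ∑ a, P a = 1) (x₁ : Fin N → X) (xt : Fin n → X) :
    (∏ j, P (x₁ j)) * ∏ j, P (xt j) ≤
      exp (-(n * genJSDiv α (empirical x₁) (empirical xt))) *
        ((∏ j, empirical x₁ (x₁ j)) * ∏ j, empirical xt (xt j)) := by
  have hNR : (0 : ℝ) < N := by rw [hN]; positivity
  rw [prod_comp_eq_prod_pow_symbolCount x₁ (empirical x₁),
    prod_comp_eq_prod_pow_symbolCount xt (empirical xt)]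
  set c₁ := symbolCount x₁
  set c₂ := symbolCount xt
  set M : X → ℝ := fun a => (c₁ a + c₂ a) / (N + n)
  have hM : ∀ a, (c₁ a ≠ 0 ∨ c₂ a ≠ 0) → 0 < M a := by
    intro a h
    have : (0 : ℝ) < c₁ a + c₂ a := by exact_mod_cast (show 0 < c₁ a + c₂ a by omega)
    positivity
  calc (∏ j, P (x₁ j)) * ∏ j, P (xt j) = ∏ a, P a ^ (c₁ a + c₂ a) := by
        simp only [prod_comp_eq_prod_pow_symbolCount, ← prod_mul_distrib, pow_add, c₁, c₂]
    _ ≤ ∏ a, M a ^ (c₁ a + c₂ a) := by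
        refine (prod_pow_le_prod_div_pow hP hPsum.le (K := N + n) ?_ (by omega)).trans_eq ?_
        · rw [sum_add_distrib, sum_symbolCount, sum_symbolCount]
        · push_cast; rfl
    _ = (∏ a, M a ^ c₁ a) * ∏ a, M a ^ c₂ a := by simp only [pow_add, prod_mul_distrib]
    _ = exp (-∑ a, c₁ a * log (empirical x₁ a / M a)) * (∏ a, empirical x₁ a ^ c₁ a) *
          (exp (-∑ a, c₂ a * log (empirical xt a / M a)) * ∏ a, empirical xt a ^ c₂ a) := by
        rw [prod_pow_eq_exp_mul_prod_pow (t := empirical x₁) (M := M),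
          prod_pow_eq_exp_mul_prod_pow (t := empirical xt) (M := M)]
        exacts [fun a ha => ⟨empirical_pos ha, hM a (.inr ha)⟩,
          fun a ha => ⟨empirical_pos ha, hM a (.inl ha)⟩]
    _ = _ := by
        rw [show empirical x₁ = fun a => (c₁ a : ℝ) / N from rfl,
          show empirical xt = fun a => (c₂ a : ℝ) / n from rfl,
          natCast_mul_genJSDiv_of_counts hn hα hN, neg_add, exp_add]
        ring

theorem gutman_type_one_error_bound_general
    {X : Type*} [Fintype X] [DecidableEq X]
    (N n : ℕ) (hn : 0 < n) (α : ℝ) (hα : 0 < α) (hN : (N : ℝ) = α * n)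
    (P₁ : X → ℝ) (hPnonneg : ∀ a, 0 ≤ P₁ a) (hPsum : ∑ a, P₁ a = 1)
    (G : (X → ℝ) → (X → ℝ) → ℝ)
    (hG : ∀ p q : X → ℝ,
      G p q = α * ∑ a, p a * Real.log (p a / ((α * p a + q a) / (1 + α))) +
              ∑ a, q a * Real.log (q a / ((α * p a + q a) / (1 + α))))
    (lam : ℝ) :
    (∑ x₁ : Fin N → X, ∑ xt : Fin n → X,
        if lam ≤ G (fun a => ((Finset.univ.filter fun i => x₁ i = a).card : ℝ) / N)
                   (fun a => ((Finset.univ.filter fun i => xt i = a).card : ℝ) / n)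
        then (∏ j, P₁ (x₁ j)) * (∏ j, P₁ (xt j)) else 0) ≤
      ((n : ℝ) + 1) ^ Fintype.card X * ((N : ℝ) + 1) ^ Fintype.card X *
        Real.exp (-(n : ℝ) * lam) := by
  have hG' : G = genJSDiv α := funext fun p => funext fun q => hG p q
  have hNpos : 0 < N := by exact_mod_cast (show (0 : ℝ) < N by rw [hN]; positivity)
  calc _ ≤ ∑ x₁ : Fin N → X, ∑ xt : Fin n → X, exp (-(n : ℝ) * lam) *
          ((∏ j, empirical x₁ (x₁ j)) * ∏ j, empirical xt (xt j)) := by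
        gcongr with x₁ _ xt _
        split_ifs with hlam
        · refine (prod_mul_prod_le_exp_neg_genJSDiv hn hα hN hPnonneg hPsum x₁ xt).trans ?_
          replace hlam : lam ≤ genJSDiv α (empirical x₁) (empirical xt) := hG' ▸ hlam
          refine mul_le_mul_of_nonneg_right (exp_le_exp.2 ?_) ?_
          · rw [neg_mul, neg_le_neg_iff]
            gcongr
          · exact mul_nonneg (prod_empirical_nonneg x₁) (prod_empirical_nonneg xt)
        · exact mul_nonneg (exp_nonneg _)
            (mul_nonneg (prod_empirical_nonneg x₁) (prod_empirical_nonneg xt))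
    _ = exp (-(n : ℝ) * lam) * ((∑ x₁ : Fin N → X, ∏ j, empirical x₁ (x₁ j)) *
          ∑ xt : Fin n → X, ∏ j, empirical xt (xt j)) := by
        rw [sum_mul_sum]
        simp only [mul_sum]
    _ ≤ exp (-(n : ℝ) * lam) *
          (((N : ℝ) + 1) ^ Fintype.card X * ((n : ℝ) + 1) ^ Fintype.card X) := by
        gcongr
        · exact sum_nonneg fun x _ => prod_empirical_nonneg x
        · exact sum_prod_empirical_le hNpos
        · exact sum_prod_empirical_le hn
    _ = _ := by ring

/-- **type-I error of Gutman's test.** Let `X₁ ∈ X^N` and `X_t ∈ X^n` be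
independent i.i.d. sequences, both from `P₁`, with `N = α·n`. Then for any `λ > 0`,
`P(GJS(T_{X₁}, T_{X_t}, α) ≥ λ) ≤ (n+1)^{|X|}·(N+1)^{|X|}·exp(−nλ)`. -/
theorem gutman_type_one_error_bound
    {X : Type*} [Fintype X] [DecidableEq X]
    (N n : ℕ) (hn : 0 < n) (α : ℝ) (hα : 0 < α) (hN : (N : ℝ) = α * n)
    (P₁ : X → ℝ) (hPnonneg : ∀ a, 0 ≤ P₁ a) (hPsum : ∑ a, P₁ a = 1)
    (G : (X → ℝ) → (X → ℝ) → ℝ)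
    (hG : ∀ p q : X → ℝ,
      G p q = α * ∑ a, p a * Real.log (p a / ((α * p a + q a) / (1 + α))) +
              ∑ a, q a * Real.log (q a / ((α * p a + q a) / (1 + α))))
    (lam : ℝ) (hlam : 0 < lam) :
    (∑ x₁ : Fin N → X, ∑ xt : Fin n → X,
        if lam ≤ G (fun a => ((Finset.univ.filter fun i => x₁ i = a).card : ℝ) / N)
                   (fun a => ((Finset.univ.filter fun i => xt i = a).card : ℝ) / n)
        then (∏ j, P₁ (x₁ j)) * (∏ j, P₁ (xt j)) else 0) ≤
      ((n : ℝ) + 1) ^ Fintype.card X * ((N : ℝ) + 1) ^ Fintype.card X *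
        Real.exp (-(n : ℝ) * lam) :=
  gutman_type_one_error_bound_general N n hn α hα hN P₁ hPnonneg hPsum G hG lam
end
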